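/- Let N ≥ λ_1 ≥ λ_2 + 2 with λ_2 ≥ 0, and for z ∈ ℂ let U_z be the A_N-submodule of A_N^{⊕2} generated by the two elements (z t^{N−λ_1}, t^{N−λ_1+1}) and (t^{N−λ_2−1}, z t^{N−λ_2}). Then for every z ∉ {0, 1, −1}, U_z is isomorphic as an A_N-module to ℂ[t]/(t^{λ_1}) ⊕ ℂ[t]/(t^{λ_2}), while U_0 is isomorphic to ℂ[t]/(t^{λ_1−1}) ⊕ ℂ[t]/(t^{λ_2+1}). -/

import Mathlib

set_option synthInstance.maxHeartbeats 1000000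
set_option maxHeartbeats 1000000

open Polynomial Finset

/-- The truncated polynomial ring `A_N = ℂ[t]/(t^N)`. -/
abbrev AN (N : ℕ) : Type := Polynomial ℂ ⧸ Ideal.span {(X : Polynomial ℂ) ^ N}

/-- The class of `t` in `A_N`. -/
noncomputable def tbar (N : ℕ) : AN N := Ideal.Quotient.mk _ X

/-- The `A_N`-module `ℂ[t]/(t^l)`, realized as `A_N/(t̄^l)` (for `l ≤ N`). -/
abbrev Uc (N l : ℕ) : Type := AN N ⧸ Ideal.span {tbar N ^ l}

/-- The `A_N`-submodule of `A_N ⊕ A_N` generated by `(z t^{N-λ₁}, t^{N-λ₁+1})` and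
`(t^{N-λ₂-1}, z t^{N-λ₂})`. -/
noncomputable def Uz (N l1 l2 : ℕ) (z : ℂ) : Submodule (AN N) (AN N × AN N) :=
  Submodule.span (AN N)
    {(z • tbar N ^ (N - l1), tbar N ^ (N - l1 + 1)),
     (tbar N ^ (N - l2 - 1), z • tbar N ^ (N - l2))}

/-!
The annihilator of `tᵏ` in `A_N` is `(t^(N-k))`. For `z ≠ 0, ±1` subtracting
`z⁻¹ t^(λ₁-λ₂-1)` times the first generator from the second leaves `(z - z⁻¹)(0, t^(N-λ₂))`,
and `z - z⁻¹` is a unit; after this change of generators, and for `z = 0` from the start, a pair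
`(r, s)` is a relation exactly when `r` and `s` annihilate one power of `t` each. So the relations
form a product `I × J` of principal ideals, and the submodule is `A_N/I × A_N/J`.
-/

namespace Submodule

variable {R M : Type*} [CommRing R] [AddCommGroup M] [Module R M]

theorem span_pair_add_smul_eq (x y : M) (c : R) {u : R} (hu : IsUnit u) :
    span R {x, c • x + u • y} = span R {x, y} := by
  obtain ⟨u, rfl⟩ := hu
  apply le_antisymm <;> rw [span_le, Set.insert_subset_iff, Set.pair_comm, Set.singleton_subset_iff]
  · exact ⟨subset_span (by simp), mem_span_pair.mpr ⟨u, c, add_comm _ _⟩⟩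
  · refine ⟨subset_span (by simp), mem_span_pair.mpr ⟨↑u⁻¹, -(↑u⁻¹ * c), ?_⟩⟩
    rw [smul_add, smul_smul, smul_smul, Units.inv_mul, one_smul, neg_smul]
    abel

theorem nonempty_span_pair_equiv_quotient_prod (x y : M) (I J : Ideal R)
    (h : ∀ r s : R, r • x + s • y = 0 ↔ r ∈ I ∧ s ∈ J) :
    Nonempty (span R {x, y} ≃ₗ[R] (R ⧸ I) × (R ⧸ J)) := by
  let φ : (R × R) →ₗ[R] M :=
    (LinearMap.toSpanSingleton R M x).coprod (LinearMap.toSpanSingleton R M y)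
  have hrange : LinearMap.range φ = span R {x, y} := by
    rw [LinearMap.range_coprod, ← LinearMap.span_singleton_eq_range,
      ← LinearMap.span_singleton_eq_range, span_insert]
  let ψ : (R × R) →ₗ[R] (R ⧸ I) × (R ⧸ J) := I.mkQ.prodMap J.mkQ
  have hker : LinearMap.ker φ = LinearMap.ker ψ := by
    ext ⟨r, s⟩
    simpa [φ, ψ, Ideal.Quotient.eq_zero_iff_mem] using h r s
  have hψ : Function.Surjective ψ := I.mkQ_surjective.prodMap J.mkQ_surjective
  exact ⟨(LinearEquiv.ofEq _ _ hrange.symm).trans <| φ.quotKerEquivRange.symm.trans <|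
    (quotEquivOfEq _ _ hker).trans <| ψ.quotKerEquivOfSurjective hψ⟩

end Submodule

theorem sub_inv_ne_zero {K : Type*} [Field K] {z : K} (hz0 : z ≠ 0) (hz1 : z ≠ 1)
    (hzn1 : z ≠ -1) : z - z⁻¹ ≠ 0 := by
  rw [sub_ne_zero, ne_eq, ← mul_eq_one_iff_eq_inv₀ hz0, mul_self_eq_one_iff, not_or]
  exact ⟨hz1, hzn1⟩

theorem tbar_pow_self (N : ℕ) : tbar N ^ N = 0 := by
  rw [tbar, ← map_pow, Ideal.Quotient.eq_zero_iff_mem]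
  exact Ideal.subset_span rfl

theorem mul_tbar_pow_eq_zero_iff {N j m : ℕ} (hjm : j + m = N) (r : AN N) :
    r * tbar N ^ j = 0 ↔ r ∈ Ideal.span {tbar N ^ m} := by
  rw [Ideal.mem_span_singleton]
  constructor
  · intro h
    obtain ⟨p, rfl⟩ := Ideal.Quotient.mk_surjective r
    rw [tbar, ← map_pow, ← map_mul, Ideal.Quotient.eq_zero_iff_mem, Ideal.mem_span_singleton,
      ← hjm, add_comm, pow_add] at h
    obtain ⟨q, hq⟩ := (mul_dvd_mul_iff_right (pow_ne_zero j X_ne_zero)).mp h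
    exact ⟨Ideal.Quotient.mk _ q, by rw [hq, map_mul, map_pow, tbar]⟩
  · rintro ⟨c, rfl⟩
    rw [mul_right_comm, ← pow_add, add_comm, hjm, tbar_pow_self, zero_mul]

theorem Uz_eq_span_of_sub_inv_ne_zero {N l1 l2 : ℕ} (h1 : l1 ≤ N) (h2 : l2 + 1 ≤ l1) {z : ℂ}
    (hz : z ≠ 0) (hw : z - z⁻¹ ≠ 0) :
    Uz N l1 l2 z = Submodule.span (AN N)
      {(z • tbar N ^ (N - l1), tbar N ^ (N - l1 + 1)), (0, tbar N ^ (N - l2))} := by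
  have hu : IsUnit (algebraMap ℂ (AN N) (z - z⁻¹)) := (isUnit_iff_ne_zero.mpr hw).map _
  rw [Uz, ← Submodule.span_pair_add_smul_eq _ (0, tbar N ^ (N - l2))
    (z⁻¹ • tbar N ^ (l1 - l2 - 1)) hu]
  congr 3
  ext
  · rw [Prod.fst_add, Prod.smul_fst, Prod.smul_fst, smul_eq_mul, smul_eq_mul, mul_zero, add_zero,
      smul_mul_smul_comm, inv_mul_cancel₀ hz, one_smul, ← pow_add,
      show l1 - l2 - 1 + (N - l1) = N - l2 - 1 by omega]
  · rw [Prod.snd_add, Prod.smul_snd, Prod.smul_snd, smul_eq_mul, smul_eq_mul, smul_mul_assoc,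
      ← pow_add, show l1 - l2 - 1 + (N - l1 + 1) = N - l2 by omega, ← Algebra.smul_def,
      ← add_smul, add_sub_cancel]

theorem smul_add_smul_tbar_pow_eq_zero_iff_of_ne_zero {N p q m k : ℕ} (hp : p + m = N)
    (hq : q + k = N) {z : ℂ} (hz : z ≠ 0) (r s : AN N) :
    r • (z • tbar N ^ p, tbar N ^ (p + 1)) + s • ((0 : AN N), tbar N ^ q) = 0 ↔
      r ∈ Ideal.span {tbar N ^ m} ∧ s ∈ Ideal.span {tbar N ^ k} := by
  simp only [Prod.smul_mk, Prod.mk_add_mk, smul_eq_mul, mul_zero, add_zero, Prod.mk_eq_zero,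
    mul_smul_comm, smul_eq_zero, hz, false_or, ← mul_tbar_pow_eq_zero_iff hp,
    ← mul_tbar_pow_eq_zero_iff hq]
  exact and_congr_right fun hr => by rw [pow_succ, ← mul_assoc, hr, zero_mul, zero_add]

theorem smul_add_smul_tbar_pow_eq_zero_iff {N p q m k : ℕ} (hp : p + m = N) (hq : q + k = N)
    (r s : AN N) :
    r • ((0 : AN N), tbar N ^ p) + s • (tbar N ^ q, (0 : AN N)) = 0 ↔
      r ∈ Ideal.span {tbar N ^ m} ∧ s ∈ Ideal.span {tbar N ^ k} := by
  simp only [Prod.smul_mk, Prod.mk_add_mk, smul_eq_mul, mul_zero, add_zero, zero_add,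
    Prod.mk_eq_zero, ← mul_tbar_pow_eq_zero_iff hp, ← mul_tbar_pow_eq_zero_iff hq]
  exact and_comm

theorem stmt7 (N l1 l2 : ℕ) (h1 : l1 ≤ N) (h2 : l2 + 2 ≤ l1) :
    (∀ z : ℂ, z ≠ 0 → z ≠ 1 → z ≠ -1 →
      Nonempty (↥(Uz N l1 l2 z) ≃ₗ[AN N] (Uc N l1 × Uc N l2))) ∧
    Nonempty (↥(Uz N l1 l2 0) ≃ₗ[AN N] (Uc N (l1 - 1) × Uc N (l2 + 1))) := by
  refine ⟨fun z hz0 hz1 hzn1 => ?_, ?_⟩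
  · rw [Uz_eq_span_of_sub_inv_ne_zero h1 (by omega) hz0 (sub_inv_ne_zero hz0 hz1 hzn1)]
    exact Submodule.nonempty_span_pair_equiv_quotient_prod _ _ _ _
      (smul_add_smul_tbar_pow_eq_zero_iff_of_ne_zero (by omega) (by omega) hz0)
  · rw [Uz, zero_smul, zero_smul]
    exact Submodule.nonempty_span_pair_equiv_quotient_prod _ _ _ _
      (smul_add_smul_tbar_pow_eq_zero_iff (by omega) (by omega))
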